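/- On the square grid ℤ², if S and T are finite sets such that span(S) and span(T) are each connected and span(S) and span(T) are at L¹-distance at most 2, then span(S ∪ T) is connected. -/

import Mathlib

/-- The span of a set of positions: the least superset closed under adding any
vertex adjacent to at least 2 vertices of the set. -/
def Span {P : Type*} (G : SimpleGraph P) (C : Set P) : Set P :=
  ⋂₀ {S : Set P | C ⊆ S ∧ ∀ p, (∃ a ∈ S, ∃ b ∈ S, a ≠ b ∧ G.Adj p a ∧ G.Adj p b) → p ∈ S}


/-- The square grid on ℤ². -/
def Grid : SimpleGraph (ℤ × ℤ) where
  Adj p q := |p.1 - q.1| + |p.2 - q.2| = 1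
  symm := ⟨by intro p q h; beta_reduce at h ⊢; rw [abs_sub_comm q.1 p.1, abs_sub_comm q.2 p.2]; exact h⟩
  loopless := ⟨by intro p; simp⟩

/-- Connectivity of a set of grid points: any two points are joined by a path
through the set. -/
def SetConn (X : Set (ℤ × ℤ)) : Prop :=
  ∀ x ∈ X, ∀ y ∈ X,
    Relation.ReflTransGen (fun u v => u ∈ X ∧ v ∈ X ∧ Grid.Adj u v) x y

/-- Inductive characterization of membership in the span. -/
inductive InSpan {P : Type*} (G : SimpleGraph P) (C : Set P) : P → Prop
  | base {p : P} : p ∈ C → InSpan G C p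
  | add {p a b : P} : InSpan G C a → InSpan G C b → a ≠ b → G.Adj p a → G.Adj p b →
      InSpan G C p

lemma subset_span {P : Type*} {G : SimpleGraph P} {C : Set P} : C ⊆ Span G C := by
  intro x hx X hX; exact hX.1 hx

lemma span_closed {P : Type*} {G : SimpleGraph P} {C : Set P} {p a b : P}
    (ha : a ∈ Span G C) (hb : b ∈ Span G C) (hab : a ≠ b) (hpa : G.Adj p a)
    (hpb : G.Adj p b) : p ∈ Span G C := by
  intro X hX
  exact hX.2 p ⟨a, ha X hX, b, hb X hX, hab, hpa, hpb⟩

lemma span_eq {P : Type*} (G : SimpleGraph P) (C : Set P) :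
    Span G C = {p | InSpan G C p} := by
  apply le_antisymm
  · exact Set.sInter_subset_of_mem ⟨fun p hp => InSpan.base hp,
      fun p ⟨a, ha, b, hb, hab, hpa, hpb⟩ => InSpan.add ha hb hab hpa hpb⟩
  · intro p hp
    induction hp with
    | base h => exact subset_span h
    | add _ _ hab hpa hpb iha ihb => exact span_closed iha ihb hab hpa hpb

lemma span_mono {P : Type*} {G : SimpleGraph P} {C D : Set P} (h : C ⊆ D) :
    Span G C ⊆ Span G D := by
  rw [span_eq, span_eq]
  intro p hp
  induction hp with
  | base hb => exact InSpan.base (h hb)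
  | add _ _ hab hpa hpb iha ihb => exact InSpan.add iha ihb hab hpa hpb

/-- Every point of the span connects, within the span, to a point of the base set. -/
lemma conn_to_base {C : Set (ℤ × ℤ)} {x : ℤ × ℤ} (hx : x ∈ Span Grid C) :
    ∃ c ∈ C, Relation.ReflTransGen
      (fun u v => u ∈ Span Grid C ∧ v ∈ Span Grid C ∧ Grid.Adj u v) x c := by
  rw [span_eq] at hx
  induction hx with
  | base h => exact ⟨_, h, Relation.ReflTransGen.refl⟩
  | @add p a b ha hb hab hpa hpb iha _ =>
    obtain ⟨c, hc, hpath⟩ := iha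
    have hpS : p ∈ Span Grid C := by rw [span_eq]; exact InSpan.add ha hb hab hpa hpb
    have haS : a ∈ Span Grid C := by rw [span_eq]; exact ha
    exact ⟨c, hc, Relation.ReflTransGen.head ⟨hpS, haS, hpa⟩ hpath⟩

lemma grid_adj (u v : ℤ × ℤ) (h : (u.1 - v.1).natAbs + (u.2 - v.2).natAbs = 1) :
    Grid.Adj u v := by
  show |u.1 - v.1| + |u.2 - v.2| = 1
  simp only [Int.abs_eq_natAbs]
  omega

lemma rel_symm {X : Set (ℤ × ℤ)} :
    Symmetric (fun u v => u ∈ X ∧ v ∈ X ∧ Grid.Adj u v) :=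
  fun _ _ ⟨hu, hv, h⟩ => ⟨hv, hu, Grid.adj_symm h⟩

/-- Two points of a span having a common neighbor are connected within the span. -/
lemma span_bridge {C : Set (ℤ × ℤ)} {p q m : ℤ × ℤ}
    (hp : p ∈ Span Grid C) (hq : q ∈ Span Grid C) (hne : p ≠ q)
    (h1 : Grid.Adj m p) (h2 : Grid.Adj m q) :
    Relation.ReflTransGen
      (fun u v => u ∈ Span Grid C ∧ v ∈ Span Grid C ∧ Grid.Adj u v) p q := by
  have hm : m ∈ Span Grid C := span_closed hp hq hne h1 h2
  exact Relation.ReflTransGen.head ⟨hp, hm, Grid.adj_symm h1⟩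
    (Relation.ReflTransGen.single ⟨hm, hq, h2⟩)

/-- If the spans of `S` and `T` are each connected and at L¹-distance at most 2 from
each other, then the span of `S ∪ T` is connected. -/
theorem span_union_connected (S T : Finset (ℤ × ℤ))
    (hS : SetConn (Span Grid ↑S)) (hT : SetConn (Span Grid ↑T))
    (hdist : ∃ p ∈ Span Grid (↑S : Set (ℤ × ℤ)), ∃ q ∈ Span Grid (↑T : Set (ℤ × ℤ)),
      |p.1 - q.1| + |p.2 - q.2| ≤ 2) :
    SetConn (Span Grid (↑S ∪ ↑T : Set (ℤ × ℤ))) := by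
  obtain ⟨p, hp, q, hq, hpq⟩ := hdist
  set U : Set (ℤ × ℤ) := Span Grid (↑S ∪ ↑T) with hUdef
  set R : ℤ × ℤ → ℤ × ℤ → Prop := fun u v => u ∈ U ∧ v ∈ U ∧ Grid.Adj u v with hRdef
  have hSU : Span Grid (↑S : Set (ℤ × ℤ)) ⊆ U := span_mono Set.subset_union_left
  have hTU : Span Grid (↑T : Set (ℤ × ℤ)) ⊆ U := span_mono Set.subset_union_right
  have liftS : ∀ {x y : ℤ × ℤ}, Relation.ReflTransGen
      (fun u v => u ∈ Span Grid (↑S : Set (ℤ × ℤ)) ∧ v ∈ Span Grid (↑S : Set (ℤ × ℤ))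
        ∧ Grid.Adj u v) x y → Relation.ReflTransGen R x y := fun h =>
    Relation.ReflTransGen.mono (p := R) (fun u v ⟨h1, h2, h3⟩ => ⟨hSU h1, hSU h2, h3⟩) _ _ h
  have liftT : ∀ {x y : ℤ × ℤ}, Relation.ReflTransGen
      (fun u v => u ∈ Span Grid (↑T : Set (ℤ × ℤ)) ∧ v ∈ Span Grid (↑T : Set (ℤ × ℤ))
        ∧ Grid.Adj u v) x y → Relation.ReflTransGen R x y := fun h =>
    Relation.ReflTransGen.mono (p := R) (fun u v ⟨h1, h2, h3⟩ => ⟨hTU h1, hTU h2, h3⟩) _ _ h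
  have hpU : p ∈ U := hSU hp
  have hqU : q ∈ U := hTU hq
  -- the bridge between the two spans
  have bridge : Relation.ReflTransGen R p q := by
    rcases eq_or_ne p q with rfl | hne
    · exact Relation.ReflTransGen.refl
    have habs : (p.1 - q.1).natAbs + (p.2 - q.2).natAbs ≤ 2 := by
      simp only [Int.abs_eq_natAbs] at hpq; omega
    have hne' : p.1 ≠ q.1 ∨ p.2 ≠ q.2 := by
      by_contra h; push_neg at h; exact hne (Prod.ext h.1 h.2)
    rcases Nat.lt_or_ge ((p.1 - q.1).natAbs + (p.2 - q.2).natAbs) 2 with h1 | h2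
    · -- distance 1: adjacent
      have : (p.1 - q.1).natAbs + (p.2 - q.2).natAbs = 1 := by omega
      exact Relation.ReflTransGen.single ⟨hpU, hqU, grid_adj _ _ this⟩
    · -- distance 2: go through a midpoint
      have heq2 : (p.1 - q.1).natAbs + (p.2 - q.2).natAbs = 2 := by omega
      rcases lt_trichotomy p.1 q.1 with hx | hx | hx
      · exact span_bridge hpU hqU hne (m := (p.1 + 1, p.2))
          (grid_adj _ _ (by omega)) (grid_adj _ _ (by omega))
      · rcases lt_or_gt_of_ne (hne'.resolve_left (by omega)) with hy | hy
        · exact span_bridge hpU hqU hne (m := (p.1, p.2 + 1))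
            (grid_adj _ _ (by omega)) (grid_adj _ _ (by omega))
        · exact span_bridge hpU hqU hne (m := (p.1, p.2 - 1))
            (grid_adj _ _ (by omega)) (grid_adj _ _ (by omega))
      · exact span_bridge hpU hqU hne (m := (p.1 - 1, p.2))
          (grid_adj _ _ (by omega)) (grid_adj _ _ (by omega))
  -- every point of U connects to the hub p
  have hub : ∀ z ∈ U, Relation.ReflTransGen R z p := by
    intro z hz
    obtain ⟨c, hc, hpath⟩ := conn_to_base hz
    have hcp : Relation.ReflTransGen R c p := by
      rcases hc with hcS | hcT
      · exact liftS (hS c (subset_span hcS) p hp)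
      · exact (liftT (hT c (subset_span hcT) q hq)).trans
          (haveI : Std.Symm R := ⟨fun _ _ h => rel_symm h⟩; Relation.ReflTransGen.symmetric.symm _ _ bridge)
    exact Relation.ReflTransGen.trans hpath hcp
  intro x hx y hy
  exact (hub x hx).trans (haveI : Std.Symm R := ⟨fun _ _ h => rel_symm h⟩; Relation.ReflTransGen.symmetric.symm _ _ (hub y hy))
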